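/- Let U : ℝ^d × P₂(ℝ^d) → ℝ with ∂ₓU ∈ C¹(ℝ^d × P₂) satisfy the second-order displacement monotonicity condition: Ẽ[⟨∂ₓ_μU(ξ, law(ξ), ξ̃) η̃, η⟩ + ⟨∂ₓₓU(ξ, law(ξ)) η, η⟩] ≥ 0 for all square-integrable ξ, η with independent copies (ξ̃, η̃). Then for every x₀ ∈ ℝ^d and every μ ∈ P₂ with positive smooth density, the matrix ∂ₓₓU(x₀, μ) is positive semidefinite. -/

import Mathlib

open MeasureTheory Matrix Filter Topology

/-- if the second-order displacement monotonicity condition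
`Ẽ[⟨∂ₓ_μU(ξ,law ξ,ξ̃)η̃,η⟩ + ⟨∂ₓₓU(ξ,law ξ)η,η⟩] ≥ 0` holds for all square-integrable
random variables on every probability space, then for every `x₀` and every probability
measure `μ` with positive smooth density (and finite second moment), the matrix
`∂ₓₓU(x₀,μ)` is positive semidefinite. -/
theorem stmt_1 {d : ℕ}
    (Dxx : (Fin d → ℝ) → Measure (Fin d → ℝ) → Matrix (Fin d) (Fin d) ℝ)
    (Dxmu : (Fin d → ℝ) → Measure (Fin d → ℝ) → (Fin d → ℝ) → Matrix (Fin d) (Fin d) ℝ)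
    (μ : Measure (Fin d → ℝ)) [IsProbabilityMeasure μ]
    (ρ : (Fin d → ℝ) → ℝ) (hρsmooth : ContDiff ℝ (⊤ : ℕ∞) ρ) (hρpos : ∀ x, 0 < ρ x)
    (hμ : μ = MeasureTheory.volume.withDensity (fun x => ENNReal.ofReal (ρ x)))
    (hμ2 : Integrable (fun x => ‖x‖ ^ 2) μ)
    -- joint continuity of the second derivatives (in the state variables)
    (hDxxcont : ∀ ν : Measure (Fin d → ℝ), Continuous fun x => Dxx x ν)
    (hDxmucont : ∀ ν : Measure (Fin d → ℝ),
      Continuous fun q : (Fin d → ℝ) × (Fin d → ℝ) => Dxmu q.1 ν q.2)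
    -- second-order displacement monotonicity on every probability space
    (hmono : ∀ (Ω : Type) (_ : MeasurableSpace Ω) (P : Measure Ω), IsProbabilityMeasure P →
      ∀ ξ η : Ω → (Fin d → ℝ), Measurable ξ → Measurable η →
        MemLp ξ 2 P → MemLp η 2 P →
        0 ≤ (∫ ω, ∫ ω', (Dxmu (ξ ω) (P.map ξ) (ξ ω')).mulVec (η ω') ⬝ᵥ η ω ∂P ∂P) +
            ∫ ω, (Dxx (ξ ω) (P.map ξ)).mulVec (η ω) ⬝ᵥ η ω ∂P) :
    ∀ x₀ : Fin d → ℝ, ∀ v : Fin d → ℝ, 0 ≤ (Dxx x₀ μ).mulVec v ⬝ᵥ v := by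
  intro x₀ v
  by_contra hneg
  push_neg at hneg
  set q : (Fin d → ℝ) → ℝ := fun x => (Dxx x μ).mulVec v ⬝ᵥ v with hqdef
  have hqcont : Continuous q := by
    have h1 : Continuous fun x => Dxx x μ := hDxxcont μ
    simp only [hqdef, Matrix.mulVec, dotProduct]
    refine continuous_finset_sum _ fun i _ => Continuous.mul ?_ continuous_const
    exact continuous_finset_sum _ fun j _ =>
      Continuous.mul (((continuous_apply j).comp ((continuous_apply i).comp h1))) continuous_const
  -- find a closed ball where q ≤ q x₀ / 2 < 0
  have hopen : IsOpen {x | q x < q x₀ / 2} := isOpen_lt hqcont continuous_const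
  have hx₀mem : x₀ ∈ {x | q x < q x₀ / 2} := by
    simp only [Set.mem_setOf_eq]; linarith
  obtain ⟨ε, hε, hball⟩ := Metric.isOpen_iff.1 hopen x₀ hx₀mem
  set B : Set (Fin d → ℝ) := Metric.closedBall x₀ (ε / 2) with hBdef
  have hBsub : B ⊆ {x | q x < q x₀ / 2} := by
    refine subset_trans ?_ hball
    exact (Metric.closedBall_subset_ball (by linarith))
  have hBmeas : MeasurableSet B := Metric.isClosed_closedBall.measurableSet
  -- μ B > 0
  have hμB : 0 < μ B := by
    rw [pos_iff_ne_zero]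
    intro h0
    rw [hμ, withDensity_apply_eq_zero
      (by exact (ENNReal.measurable_ofReal.comp hρsmooth.continuous.measurable))] at h0
    have : {x : Fin d → ℝ | ENNReal.ofReal (ρ x) ≠ 0} = Set.univ := by
      ext x; simp [← pos_iff_ne_zero, ENNReal.ofReal_pos, hρpos x]
    rw [this, Set.univ_inter] at h0
    have hvol : 0 < MeasureTheory.volume B := by
      refine lt_of_lt_of_le ?_ (measure_mono (Metric.ball_subset_closedBall))
      exact Metric.measure_ball_pos _ _ (by linarith)
    exact absurd h0 (ne_of_gt hvol)
  -- the probability space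
  set ν : Measure Bool := (2⁻¹ : ENNReal) • (Measure.dirac true + Measure.dirac false) with hνdef
  have hνprob : IsProbabilityMeasure ν := by
    constructor
    simp [hνdef]
    exact ENNReal.inv_two_add_inv_two
  haveI := hνprob
  set s : Bool → ℝ := fun b => if b then 1 else -1 with hsdef
  have hsint : ∫ b, s b ∂ν = 0 := by
    rw [hνdef, integral_smul_measure, integral_add_measure Integrable.of_finite
      Integrable.of_finite, integral_dirac, integral_dirac]
    simp [hsdef]
  set w : (Fin d → ℝ) → (Fin d → ℝ) := B.indicator (fun _ => v) with hwdef
  set P : Measure ((Fin d → ℝ) × Bool) := μ.prod ν with hPdef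
  haveI : IsProbabilityMeasure P := by rw [hPdef]; infer_instance
  set ξ : (Fin d → ℝ) × Bool → (Fin d → ℝ) := Prod.fst with hξdef
  set η : (Fin d → ℝ) × Bool → (Fin d → ℝ) := fun ω => s ω.2 • w ω.1 with hηdef
  have hξmeas : Measurable ξ := measurable_fst
  have hsmeas : Measurable s := measurable_from_top
  have hwmeas : Measurable w := (measurable_const.indicator hBmeas)
  have hηmeas : Measurable η := ((hsmeas.comp measurable_snd).smul (hwmeas.comp measurable_fst))
  have hmapξ : P.map ξ = μ := by
    rw [hPdef, hξdef, Measure.map_fst_prod, measure_univ, one_smul]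
  have hξL2 : MemLp ξ 2 P := by
    have hid : MemLp (fun x : Fin d → ℝ => x) 2 μ :=
      (memLp_two_iff_integrable_sq_norm aestronglyMeasurable_id).2 hμ2
    rw [← hmapξ] at hid
    exact (memLp_map_measure_iff hid.aestronglyMeasurable hξmeas.aemeasurable).1 hid
  have hηL2 : MemLp η 2 P := by
    refine MemLp.of_bound hηmeas.aestronglyMeasurable ‖v‖ (Filter.Eventually.of_forall ?_)
    intro ω
    rw [hηdef]
    simp only [norm_smul]
    have hs1 : ‖s ω.2‖ = 1 := by rw [hsdef]; cases ω.2 <;> simp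
    rw [hs1, one_mul]
    rw [hwdef]
    by_cases h : ω.1 ∈ B <;> simp [Set.indicator_of_mem, Set.indicator_of_notMem, h]
  have hkey := hmono _ _ P inferInstance ξ η hξmeas hηmeas hξL2 hηL2
  rw [hmapξ] at hkey
  -- the double integral vanishes
  have hdouble : (∫ ω, ∫ ω', (Dxmu (ξ ω) μ (ξ ω')).mulVec (η ω') ⬝ᵥ η ω ∂P ∂P) = 0 := by
    have hinner : ∀ ω, ∫ ω', (Dxmu (ξ ω) μ (ξ ω')).mulVec (η ω') ⬝ᵥ η ω ∂P = 0 := by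
      intro ω
      have heq : ∀ ω' : (Fin d → ℝ) × Bool,
          (Dxmu (ξ ω) μ (ξ ω')).mulVec (η ω') ⬝ᵥ η ω
            = (fun x => (Dxmu (ξ ω) μ x).mulVec (w x) ⬝ᵥ η ω) ω'.1 * s ω'.2 := by
        intro ω'
        simp only [hηdef, hξdef, Matrix.mulVec_smul, smul_dotProduct, smul_eq_mul]
        ring
      rw [integral_congr_ae (Filter.Eventually.of_forall heq), hPdef,
        integral_prod_mul (fun x => (Dxmu (ξ ω) μ x).mulVec (w x) ⬝ᵥ η ω) s,
        hsint, mul_zero]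
    simp only [hinner, integral_zero]
  rw [hdouble, zero_add] at hkey
  -- the single integral equals ∫ over B of q
  have hsingle : (∫ ω, (Dxx (ξ ω) μ).mulVec (η ω) ⬝ᵥ η ω ∂P) = ∫ x in B, q x ∂μ := by
    have heq : ∀ ω : (Fin d → ℝ) × Bool,
        (Dxx (ξ ω) μ).mulVec (η ω) ⬝ᵥ η ω
          = (fun x => B.indicator q x) ω.1 * (fun _ : Bool => (1:ℝ)) ω.2 := by
      intro ω
      simp only [hηdef, hξdef, Matrix.mulVec_smul, smul_dotProduct,
        dotProduct_smul, smul_eq_mul, mul_one]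
      have hs2 : s ω.2 * s ω.2 = 1 := by rw [hsdef]; cases ω.2 <;> norm_num
      rw [← mul_assoc, hs2, one_mul, hwdef]
      by_cases h : ω.1 ∈ B
      · simp [Set.indicator_of_mem h, hqdef]
      · simp [Set.indicator_of_notMem h]
    rw [integral_congr_ae (Filter.Eventually.of_forall heq), hPdef,
      integral_prod_mul (fun x => B.indicator q x) (fun _ : Bool => (1 : ℝ))]
    have huniv : ν ({false, true} : Set Bool) = 1 := by
      rw [show ({false, true} : Set Bool) = Set.univ from by ext b; cases b <;> simp]
      exact measure_univ
    simp [integral_indicator hBmeas, huniv, Measure.real]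
  rw [hsingle] at hkey
  -- but ∫ over B of q is negative: contradiction
  have hqint : IntegrableOn q B μ :=
    hqcont.continuousOn.integrableOn_compact (isCompact_closedBall _ _)
  have hbound : ∫ x in B, q x ∂μ ≤ ∫ _x in B, q x₀ / 2 ∂μ := by
    refine setIntegral_mono_on hqint (integrableOn_const (measure_lt_top μ B).ne)
      hBmeas fun x hx => ?_
    exact le_of_lt (hBsub hx)
  rw [setIntegral_const, measureReal_def] at hbound
  have htoReal : 0 < (μ B).toReal :=
    ENNReal.toReal_pos (ne_of_gt hμB) (measure_ne_top μ B)
  have : (μ B).toReal • (q x₀ / 2) < 0 := by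
    rw [smul_eq_mul]
    exact mul_neg_of_pos_of_neg htoReal (by linarith)
  linarith
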